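/- arXiv:1307.2210 — 6 statements merged into one kernel-verified Lean document; each statement's English description precedes it below -/
import Mathlib

section
/- Let A be a Banach algebra and d a derivation of A such that d maps every quasinilpotent element of A to a quasinilpotent element. Then d maps the Jacobson radical of A into the Jacobson radical of A. -/
/-- An element of a (possibly non-unital) complex Banach algebra is *quasinilpotent*
if its (quasi)spectrum is contained in `{0}`. -/
def IsQuasinilpotent {A : Type*} [NonUnitalRing A] [Module ℂ A] (a : A) : Prop :=
  quasispectrum ℂ a ⊆ {0}

/-- The Jacobson radical of `A`, characterized as
`rad(A) = {q | q • A consists of quasinilpotent elements}`. -/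
def jacobsonRadicalSet (A : Type*) [NonUnitalRing A] [Module ℂ A] : Set A :=
  {q : A | ∀ a : A, IsQuasinilpotent (q * a)}

/-!
Since `d q * a = d (q * a) - q * d a` and `d (q * a)` is quasinilpotent (as `q * a` is), it
suffices that `u + v` is quasinilpotent whenever `u` is and `v ∈ q A`. In the unitization, for
`z ≠ 0` let `w = (z - u)⁻¹`; then `z - (u + v) = (z - u) (1 - w v)`, and `w v` is quasinilpotent
because `v w ∈ q A` is and `σ(xy) \ {0} = σ(yx) \ {0}`.
-/

open Unitization

section Spectrum

variable {𝕜 B : Type*} [Field 𝕜] [Ring B] [Algebra 𝕜 B]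

lemma isUnit_one_add_of_spectrum_subset_zero {x : B} (hx : spectrum 𝕜 x ⊆ {0}) :
    IsUnit (1 + x) := by
  have hneg_one : (-1 : 𝕜) ∉ spectrum 𝕜 x := fun h ↦ by simpa using hx h
  have := (spectrum.notMem_iff.mp hneg_one).neg
  rwa [map_neg, map_one, neg_sub, sub_neg_eq_add, add_comm] at this

lemma spectrum_mul_comm_subset_zero {x y : B} (h : spectrum 𝕜 (x * y) ⊆ {0}) :
    spectrum 𝕜 (y * x) ⊆ {0} := by
  rw [← Set.sdiff_eq_empty, ← spectrum.nonzero_mul_comm, Set.sdiff_eq_empty]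
  exact h

lemma spectrum_add_subset_zero {u v : B} (hu : spectrum 𝕜 u ⊆ {0})
    (hv : ∀ w, spectrum 𝕜 (v * w) ⊆ {0}) : spectrum 𝕜 (u + v) ⊆ {0} := by
  intro z hz
  by_contra hz0
  obtain ⟨zu, hzu⟩ : IsUnit (algebraMap 𝕜 B z - u) := spectrum.notMem_iff.mp fun h ↦ hz0 (hu h)
  have hfactor : algebraMap 𝕜 B z - (u + v) = zu * (1 + -↑zu⁻¹ * v) := by
    rw [mul_add, mul_one, neg_mul, mul_neg, ← mul_assoc, Units.mul_inv, one_mul, hzu]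
    abel
  have hunit : IsUnit (1 + -↑zu⁻¹ * v) :=
    isUnit_one_add_of_spectrum_subset_zero (spectrum_mul_comm_subset_zero (hv _))
  exact spectrum.notMem_iff.mpr (hfactor ▸ zu.isUnit.mul hunit) hz

end Spectrum

section Radical

variable {A : Type*} [NonUnitalRing A] [Module ℂ A] [IsScalarTower ℂ A A] [SMulCommClass ℂ A A]

lemma isQuasinilpotent_iff_spectrum_inr {a : A} :
    IsQuasinilpotent a ↔ spectrum ℂ (a : Unitization ℂ A) ⊆ {0} := by
  rw [IsQuasinilpotent, quasispectrum_eq_spectrum_inr]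

lemma spectrum_inr_mul_mul_subset_zero {q : A} (hq : q ∈ jacobsonRadicalSet A) (b : A)
    (w : Unitization ℂ A) : spectrum ℂ (((q * b : A) : Unitization ℂ A) * w) ⊆ {0} := by
  have hmul : ((q * b : A) : Unitization ℂ A) * w = ((q * (w.fst • b + b * w.snd) : A) : _) := by
    ext
    · simp [fst_mul]
    · simp [snd_mul, mul_add, mul_smul_comm, mul_assoc]
  rw [hmul, ← isQuasinilpotent_iff_spectrum_inr]
  exact hq _

lemma IsQuasinilpotent.add_mul_of_mem_jacobsonRadicalSet {u q : A} (hu : IsQuasinilpotent u)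
    (hq : q ∈ jacobsonRadicalSet A) (b : A) : IsQuasinilpotent (u + q * b) := by
  rw [isQuasinilpotent_iff_spectrum_inr, inr_add]
  exact spectrum_add_subset_zero (isQuasinilpotent_iff_spectrum_inr.mp hu)
    (spectrum_inr_mul_mul_subset_zero hq b)

end Radical

theorem derivation_maps_radical_into_radical_general
    {A : Type*} [NonUnitalNormedRing A] [NormedSpace ℂ A]
    [IsScalarTower ℂ A A] [SMulCommClass ℂ A A]
    (d : A →ₗ[ℂ] A) (hd : ∀ x y : A, d (x * y) = d x * y + x * d y)
    (hQ : ∀ q : A, IsQuasinilpotent q → IsQuasinilpotent (d q)) :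
    ∀ q ∈ jacobsonRadicalSet A, d q ∈ jacobsonRadicalSet A := by
  intro q hq a
  have hleibniz : d q * a = d (q * a) + q * -d a := by
    rw [hd, mul_neg]
    abel
  rw [hleibniz]
  exact (hQ _ (hq a)).add_mul_of_mem_jacobsonRadicalSet hq _

/-- If a derivation `d` of a complex Banach algebra `A` maps every
quasinilpotent element to a quasinilpotent element, then `d` maps the Jacobson radical
of `A` into the Jacobson radical of `A`. -/
theorem derivation_maps_radical_into_radical
    {A : Type*} [NonUnitalNormedRing A] [NormedSpace ℂ A]
    [IsScalarTower ℂ A A] [SMulCommClass ℂ A A] [CompleteSpace A]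
    (d : A →ₗ[ℂ] A) (hd : ∀ x y : A, d (x * y) = d x * y + x * d y)
    (hQ : ∀ q : A, IsQuasinilpotent q → IsQuasinilpotent (d q)) :
    ∀ q ∈ jacobsonRadicalSet A, d q ∈ jacobsonRadicalSet A :=
  derivation_maps_radical_into_radical_general d hd hQ
end

section
/- Every continuous derivation of a commutative Banach algebra A maps A into the Jacobson radical of A (Singer–Wermer theorem). -/
/-!
For a continuous derivation `D`, the operators `exp (t • D)` solve `u' = D u`, and so does
`t ↦ exp (t • D) a * exp (t • D) b` by the Leibniz rule; uniqueness of solutions makes every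
`exp (t • D)` an algebra endomorphism. Hence for a character `ψ` the entire function
`t ↦ ψ (exp (t • D) x)` is bounded by `‖x‖ * ‖1‖`, so it is constant by Liouville, and its
derivative at `0` gives `ψ (D x) = 0`. An element killed by every character lies in the
Jacobson radical, since `1 + (D x) y` is then killed by no character, hence invertible.
-/

open NormedSpace WeakDual

section LinearODE

variable {𝕂 E : Type*} [RCLike 𝕂] [NormedAddCommGroup E] [NormedSpace 𝕂 E] [CompleteSpace E]

theorem hasDerivAt_exp_smul_apply (D : E →L[𝕂] E) (a : E) (t : 𝕂) :
    HasDerivAt (fun s : 𝕂 => exp (s • D) a) (D (exp (t • D) a)) t := by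
  simpa using (hasDerivAt_exp_smul_const' D t).clm_apply (hasDerivAt_const t a)

theorem exp_smul_mul_exp_neg_smul (D : E →L[𝕂] E) (t : 𝕂) :
    exp (t • D) * exp (-t • D) = 1 := by
  have h_mem (s : 𝕂) : s • D ∈ Metric.eball 0 (expSeries 𝕂 (E →L[𝕂] E)).radius :=
    (expSeries_radius_eq_top 𝕂 (E →L[𝕂] E)).symm ▸ edist_lt_top _ _
  rw [← exp_add_of_commute_of_mem_ball ((Commute.refl D).smul_left t |>.smul_right (-t))
    (h_mem t) (h_mem (-t)), neg_smul, add_neg_cancel, exp_zero]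

theorem eq_exp_smul_apply_of_hasDerivAt (D : E →L[𝕂] E) {u : 𝕂 → E}
    (hu : ∀ t, HasDerivAt u (D (u t)) t) (t : 𝕂) : u t = exp (t • D) (u 0) := by
  have hderiv (s : 𝕂) : HasDerivAt (fun r => exp (-r • D) (u r)) 0 s := by
    have hexp := (hasDerivAt_exp_smul_const' (𝕂 := 𝕂) D (-s)).scomp s (hasDerivAt_neg s)
    refine (hexp.clm_apply (hu s)).congr_deriv ?_
    have hcomm : D * exp (-s • D) = exp (-s • D) * D :=
      ((Commute.refl D).smul_right (-s)).exp_right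
    change ((-1 : 𝕂) • (D * exp (-s • D))) (u s) + exp (-s • D) (D (u s)) = 0
    rw [smul_apply, hcomm, mul_apply_eq_comp, neg_one_smul, neg_add_cancel]
  have hconst := is_const_of_deriv_eq_zero (fun s => (hderiv s).differentiableAt)
    (fun s => (hderiv s).deriv) t 0
  simp only [neg_zero, zero_smul, exp_zero, one_apply_eq_self] at hconst
  rw [← hconst, ← mul_apply_eq_comp, exp_smul_mul_exp_neg_smul, one_apply_eq_self]

end LinearODE

section Leibniz

variable {𝕂 A : Type*} [RCLike 𝕂] [NormedRing A] [NormedAlgebra 𝕂 A] [CompleteSpace A]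
  (D : A →L[𝕂] A) (hD : ∀ x y : A, D (x * y) = D x * y + x * D y)
include hD

theorem exp_smul_apply_mul (t : 𝕂) (a b : A) :
    exp (t • D) (a * b) = exp (t • D) a * exp (t • D) b := by
  have hu (s : 𝕂) : HasDerivAt (fun r => exp (r • D) a * exp (r • D) b)
      (D (exp (s • D) a * exp (s • D) b)) s := by
    rw [hD]
    exact (hasDerivAt_exp_smul_apply D a s).mul (hasDerivAt_exp_smul_apply D b s)
  have h := eq_exp_smul_apply_of_hasDerivAt D hu t
  rwa [zero_smul 𝕂 D, exp_zero, one_apply_eq_self, one_apply_eq_self, eq_comm] at h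

theorem exp_smul_apply_one (t : 𝕂) : exp (t • D) (1 : A) = 1 := by
  have hD1 : D 1 = 0 := by simpa using hD 1 1
  have hu (s : 𝕂) : HasDerivAt (fun _ => (1 : A)) (D 1) s := hD1 ▸ hasDerivAt_const s 1
  exact (eq_exp_smul_apply_of_hasDerivAt D hu t).symm

noncomputable def expSMulAlgHom (t : 𝕂) : A →ₐ[𝕂] A :=
  AlgHom.ofLinearMap (exp (t • D)).toLinearMap (exp_smul_apply_one D hD t)
    (exp_smul_apply_mul D hD t)

end Leibniz

theorem AlgHom.apply_leibniz_eq_zero {A : Type*} [NormedRing A] [NormedAlgebra ℂ A]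
    [CompleteSpace A] (ψ : A →ₐ[ℂ] ℂ) (D : A →L[ℂ] A)
    (hD : ∀ x y : A, D (x * y) = D x * y + x * D y) (x : A) : ψ (D x) = 0 := by
  set f : ℂ → ℂ := fun t => ψ (exp (t • D) x)
  have hf (t : ℂ) : HasDerivAt f (ψ (D (exp (t • D) x))) t :=
    ψ.toContinuousLinearMap.hasFDerivAt.comp_hasDerivAt t (hasDerivAt_exp_smul_apply D x t)
  have hbounded : Bornology.IsBounded (Set.range f) := by
    refine isBounded_iff_forall_norm_le.mpr ⟨‖x‖ * ‖(1 : A)‖, ?_⟩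
    rintro - ⟨t, rfl⟩
    exact AlgHom.norm_apply_le_self_mul_norm_one (ψ.comp (expSMulAlgHom D hD t)) x
  have hconst : f = fun _ => f 0 := funext fun t =>
    Differentiable.apply_eq_apply_of_bounded (fun s => (hf s).differentiableAt) hbounded t 0
  have hf0 : HasDerivAt f 0 0 := by
    rw [hconst]
    exact hasDerivAt_const 0 (f 0)
  have h := (hf 0).unique hf0
  rwa [zero_smul ℂ D, exp_zero, one_apply_eq_self] at h

theorem mem_jacobson_bot_of_forall_algHom_apply_eq_zero {A : Type*} [NormedCommRing A]
    [NormedAlgebra ℂ A] [CompleteSpace A] {a : A} (h : ∀ ψ : A →ₐ[ℂ] ℂ, ψ a = 0) :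
    a ∈ (⊥ : Ideal A).jacobson := by
  refine Ideal.mem_jacobson_bot.mpr fun y => by_contra fun hy => ?_
  obtain ⟨φ, hφ⟩ := CharacterSpace.exists_apply_eq_zero hy
  have ha : φ a = 0 := h (CharacterSpace.equivAlgHom φ)
  simp [ha] at hφ

/-- **Singer–Wermer.** Every continuous derivation of a commutative complex
Banach algebra `A` maps `A` into the Jacobson radical of `A`. -/
theorem singer_wermer
    {A : Type*} [NormedCommRing A] [NormedAlgebra ℂ A] [CompleteSpace A]
    (d : A →ₗ[ℂ] A) (hd : ∀ x y : A, d (x * y) = d x * y + x * d y)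
    (hdc : Continuous d) :
    ∀ x : A, d x ∈ Ideal.jacobson (⊥ : Ideal A) := fun x =>
  mem_jacobson_bot_of_forall_algHom_apply_eq_zero fun ψ =>
    ψ.apply_leibniz_eq_zero ⟨d, hdc⟩ hd x
end

section
/- Let A be a complex Banach algebra and π a continuous irreducible representation of A on a Banach space X of dimension at least 2. If A has the property that every continuous bilinear map φ : A × A → Y into a Banach space Y vanishing on pairs (a,b) with ab = 0 satisfies φ(ab,c) = φ(a,bc) for all a,b,c (property 𝔹), then there exist a, b ∈ A with ab = 0, π(a) ≠ 0, and π(b) ≠ 0. -/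
/-!
Suppose no pair `a b` with `a * b = 0` has `π a ≠ 0 ≠ π b`. Then the `L(X)`-valued bilinear maps
`(a, c) ↦ π a * f * π c` vanish on zero products, so property `𝔹` gives
`π a * (π b * f - f * π b) * π c = 0` for all `a c`, and irreducibility forces
`π b * f = f * π b` for every operator `f`. By Hahn–Banach the centre of `L(X)` consists of the
scalars, so every `π b` is a scalar and irreducibility makes `X` at most one-dimensional.
-/

universe u

open ContinuousLinearMap

def HasPropertyB (A : Type u) [NonUnitalNormedRing A] [NormedSpace ℂ A] : Prop :=
  ∀ (Y : Type u) [NormedAddCommGroup Y] [NormedSpace ℂ Y] [CompleteSpace Y]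
    (φ : A →L[ℂ] A →L[ℂ] Y),
    (∀ a b : A, a * b = 0 → φ a b = 0) → ∀ a b c : A, φ (a * b) c = φ a (b * c)

theorem HasPropertyB.map_mul_mul_map_eq {A : Type u} [NonUnitalNormedRing A] [NormedSpace ℂ A]
    {B : Type u} [NormedRing B] [NormedAlgebra ℂ B] [CompleteSpace B] (hB : HasPropertyB A)
    (π : A →ₙₐ[ℂ] B) (hπc : Continuous π) (hπ : ∀ a b : A, a * b = 0 → π a = 0 ∨ π b = 0)
    (a b c : A) (f : B) : π (a * b) * f * π c = π a * f * π (b * c) := by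
  let πL : A →L[ℂ] B :=
    { toFun := π, map_add' := map_add π, map_smul' := map_smul π, cont := hπc }
  have := hB (B →L[ℂ] B) ((mulLeftRight ℂ B).bilinearComp πL πL) (fun x y hxy => by
    rcases hπ x y hxy with h | h <;> ext g <;> simp [πL, h]) a b c
  simpa [πL] using congr($this f)

theorem eq_zero_of_forall_mul_mul_eq_zero {A R M : Type*} [Semiring R] [TopologicalSpace M]
    [AddCommMonoid M] [Module R M] {π : A → M →L[R] M}
    (hπ : ∀ ξ : M, ξ ≠ 0 → ∀ η : M, ∃ a : A, π a ξ = η) {T : M →L[R] M}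
    (hT : ∀ a c : A, π a * T * π c = 0) : T = 0 := by
  ext x
  by_contra hTx
  obtain ⟨c, hc⟩ := hπ (T x) hTx x
  obtain ⟨a, ha⟩ := hπ (T x) hTx (T x)
  exact hTx <| by simpa [hc, ha] using congr($(hT a c) (T x))

theorem rank_le_one_of_forall_mem_bot {A K M : Type*} [Field K] [TopologicalSpace M]
    [AddCommGroup M] [IsTopologicalAddGroup M] [Module K M] [ContinuousConstSMul K M]
    {π : A → M →L[K] M}
    (hπ : ∀ ξ : M, ξ ≠ 0 → ∀ η : M, ∃ a : A, π a ξ = η)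
    (hscalar : ∀ a, π a ∈ (⊥ : Subalgebra K (M →L[K] M))) : Module.rank K M ≤ 1 := by
  rw [rank_le_one_iff]
  rcases subsingleton_or_nontrivial M with _ | _
  · exact ⟨0, fun v => ⟨0, Subsingleton.elim _ _⟩⟩
  obtain ⟨ξ, hξ⟩ := exists_ne (0 : M)
  refine ⟨ξ, fun v => ?_⟩
  obtain ⟨a, rfl⟩ := hπ ξ hξ v
  obtain ⟨r, hr⟩ := Algebra.mem_bot.1 (hscalar a)
  exact ⟨r, by simp [← hr, Algebra.algebraMap_eq_smul_one]⟩

theorem propertyB_gives_orthogonal_pair_general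
    {A : Type u} [NonUnitalNormedRing A] [NormedSpace ℂ A]
    {X : Type u} [NormedAddCommGroup X] [NormedSpace ℂ X] [CompleteSpace X]
    (hB : ∀ (Y : Type u) [NormedAddCommGroup Y] [NormedSpace ℂ Y] [CompleteSpace Y]
      (φ : A →L[ℂ] A →L[ℂ] Y),
      (∀ a b : A, a * b = 0 → φ a b = 0) → ∀ a b c : A, φ (a * b) c = φ a (b * c))
    (π : A →ₙₐ[ℂ] (X →L[ℂ] X)) (hπc : Continuous π)
    (hirr : ∀ ξ : X, ξ ≠ 0 → ∀ η : X, ∃ a : A, π a ξ = η)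
    (hdim : 2 ≤ Module.rank ℂ X) :
    ∃ a b : A, a * b = 0 ∧ π a ≠ 0 ∧ π b ≠ 0 := by
  by_contra! h
  have hπ : ∀ a b : A, a * b = 0 → π a = 0 ∨ π b = 0 := fun a b hab =>
    or_iff_not_imp_left.2 (h a b hab)
  have hscalar (b : A) : π b ∈ (⊥ : Subalgebra ℂ (X →L[ℂ] X)) := by
    rw [← Algebra.IsCentral.center_eq_bot, Subalgebra.mem_center_iff]
    intro f
    refine sub_eq_zero.1 <| eq_zero_of_forall_mul_mul_eq_zero hirr fun a c => ?_
    have := HasPropertyB.map_mul_mul_map_eq hB π hπc hπ a b c f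
    simp only [map_mul, mul_sub, sub_mul, mul_assoc] at this ⊢
    exact sub_eq_zero.2 this.symm
  exact (rank_le_one_of_forall_mem_bot hirr hscalar).not_gt (Cardinal.one_lt_two.trans_le hdim)

/-- Let `A` be a complex Banach algebra with property `𝔹` (every continuous
bilinear map `φ : A × A → Y` into a Banach space `Y` vanishing on pairs with zero product
satisfies `φ(ab,c) = φ(a,bc)`), and let `π` be a continuous irreducible representation of `A`
on a Banach space `X` with `dim X ≥ 2`.  Then there exist `a, b ∈ A` with `ab = 0`,
`π(a) ≠ 0` and `π(b) ≠ 0`. -/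
theorem propertyB_gives_orthogonal_pair
    {A : Type u} [NonUnitalNormedRing A] [NormedSpace ℂ A]
    [IsScalarTower ℂ A A] [SMulCommClass ℂ A A] [CompleteSpace A]
    {X : Type u} [NormedAddCommGroup X] [NormedSpace ℂ X] [CompleteSpace X]
    (hB : ∀ (Y : Type u) [NormedAddCommGroup Y] [NormedSpace ℂ Y] [CompleteSpace Y]
      (φ : A →L[ℂ] A →L[ℂ] Y),
      (∀ a b : A, a * b = 0 → φ a b = 0) → ∀ a b c : A, φ (a * b) c = φ a (b * c))
    (π : A →ₙₐ[ℂ] (X →L[ℂ] X)) (hπc : Continuous π)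
    (hirr : ∀ ξ : X, ξ ≠ 0 → ∀ η : X, ∃ a : A, π a ξ = η)
    (hdim : 2 ≤ Module.rank ℂ X) :
    ∃ a b : A, a * b = 0 ∧ π a ≠ 0 ∧ π b ≠ 0 :=
  propertyB_gives_orthogonal_pair_general hB π hπc hirr hdim
end

section
/- Let A be a non-unital complex Banach algebra with property β and A₁ = ℂ1 ⊕ A its unitization. Then A₁ has property β. -/
universe u

/-- A continuous irreducible representation of `A` on a complex Banach space. -/
structure BanachRep (A : Type*) [NonUnitalNormedRing A] [NormedSpace ℂ A]
    [IsScalarTower ℂ A A] [SMulCommClass ℂ A A] where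
  X : Type u
  [ng : NormedAddCommGroup X]
  [ns : NormedSpace ℂ X]
  [cs : CompleteSpace X]
  π : A →ₙₐ[ℂ] (X →L[ℂ] X)
  continuous : Continuous π
  irreducible : ∀ ξ : X, ξ ≠ 0 → ∀ η : X, ∃ a : A, π a ξ = η

attribute [instance] BanachRep.ng BanachRep.ns BanachRep.cs

/-- Property `β` for `A`. -/
def HasPropertyBeta (A : Type*) [NonUnitalNormedRing A] [NormedSpace ℂ A]
    [IsScalarTower ℂ A A] [SMulCommClass ℂ A A] : Prop :=
  ∃ (ι : Type u) (r : ι → BanachRep.{u} A),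
    {a : A | ∀ i, (r i).π a = 0} = jacobsonRadicalSet A ∧
    ∀ i, 2 ≤ Module.rank ℂ (r i).X → ∃ q : A, q * q = 0 ∧ (r i).π q ≠ 0

/-!
Besides the extensions `α1 + a ↦ α + πᵢ(a)` of the representations of `A`, the family for `A₁`
contains the one-dimensional character `α1 + a ↦ α`. Its joint kernel is
`{x | x.fst = 0 ∧ x.snd ∈ rad A}` and the square-zero elements of `A` still serve, so everything
comes down to `rad A₁ = rad A`. An `x ∈ rad A₁` is quasinilpotent while `x.fst ∈ σ(x)`, so `x ∈ A`.
Conversely, for `q ∈ rad A` and `c = β1 + b`: `q` is quasinilpotent since `q²` is, so `u = 1 - βq`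
is invertible, and `1 - qc = u (1 - u⁻¹ q b)` is invertible because `1 - q (b u⁻¹)` is and
`b u⁻¹ ∈ A`.
-/

theorem isUnit_one_sub_mul_comm {R : Type*} [Ring R] {a b : R} :
    IsUnit (1 - a * b) ↔ IsUnit (1 - b * a) := by
  simpa [spectrum.mem_iff] using
    (spectrum.unit_mem_mul_comm (R := ℤ) (a := a) (b := b) (r := 1)).not

section Unital

variable {B : Type*} [Ring B] [Algebra ℂ B]

theorem isQuasinilpotent_iff_spectrum_subset {x : B} :
    IsQuasinilpotent x ↔ spectrum ℂ x ⊆ {0} := by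
  simp [IsQuasinilpotent, quasispectrum_eq_spectrum_union_zero]

theorem inv_notMem_spectrum_iff_isUnit {x : B} {μ : ℂ} (hμ : μ ≠ 0) :
    μ⁻¹ ∉ spectrum ℂ x ↔ IsUnit (1 - μ • x) := by
  lift μ to ℂˣ using isUnit_iff_ne_zero.mpr hμ
  rw [spectrum.notMem_iff, Algebra.algebraMap_eq_smul_one, ← Units.val_inv_eq_inv_val,
    ← Units.smul_def, IsUnit.smul_sub_iff_sub_inv_smul, inv_inv, Units.smul_def]

theorem isQuasinilpotent_iff_forall_isUnit {x : B} :
    IsQuasinilpotent x ↔ ∀ μ : ℂ, IsUnit (1 - μ • x) := by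
  rw [isQuasinilpotent_iff_spectrum_subset]
  refine ⟨fun h μ ↦ ?_, fun h μ hμ ↦ ?_⟩
  · rcases eq_or_ne μ 0 with rfl | hμ
    · simp
    · exact (inv_notMem_spectrum_iff_isUnit hμ).mp fun hm ↦ inv_ne_zero hμ (h hm)
  · by_contra hne
    exact (inv_notMem_spectrum_iff_isUnit (inv_ne_zero hne)).mpr (h _) (by rwa [inv_inv])

theorem IsQuasinilpotent.of_mul_self {x : B} (h : IsQuasinilpotent (x * x)) :
    IsQuasinilpotent x := by
  rw [isQuasinilpotent_iff_spectrum_subset] at h ⊢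
  intro μ hμ
  simpa using h (by simpa [sq] using spectrum.pow_mem_pow x 2 hμ : μ * μ ∈ spectrum ℂ (x * x))

theorem mem_jacobsonRadicalSet_iff_forall_isUnit {x : B} :
    x ∈ jacobsonRadicalSet B ↔ ∀ y, IsUnit (1 - x * y) := by
  simp only [jacobsonRadicalSet, Set.mem_ofPred_eq, isQuasinilpotent_iff_forall_isUnit]
  refine ⟨fun h y ↦ by simpa using h y 1, fun h y μ ↦ ?_⟩
  rw [← mul_smul_comm]
  exact h _

end Unital

section Unitization

variable {A : Type*} [NonUnitalRing A] [Module ℂ A] [IsScalarTower ℂ A A] [SMulCommClass ℂ A A]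

local notation "A₁" => Unitization ℂ A

theorem isQuasinilpotent_inr_iff {a : A} : IsQuasinilpotent (a : A₁) ↔ IsQuasinilpotent a := by
  rw [IsQuasinilpotent, IsQuasinilpotent, Unitization.quasispectrum_inr_eq ℂ ℂ]

theorem isUnit_one_sub_inr_mul {q : A} (hq : q ∈ jacobsonRadicalSet A) (c : A₁) :
    IsUnit (1 - (q : A₁) * c) := by
  have hq₁ : IsQuasinilpotent (q : A₁) :=
    .of_mul_self (by rw [← Unitization.inr_mul, isQuasinilpotent_inr_iff]; exact hq q)
  obtain ⟨u, hu⟩ := isQuasinilpotent_iff_forall_isUnit.mp hq₁ c.fst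
  obtain ⟨b, hb⟩ : ∃ b : A, (b : A₁) = c.snd * ↑u⁻¹ :=
    CanLift.prf _ (by rw [Unitization.fst_mul, Unitization.fst_inr, zero_mul])
  have hsplit : 1 - (q : A₁) * c = u * (1 - ↑u⁻¹ * (q * c.snd : A₁)) := by
    rw [mul_sub, mul_one, u.mul_inv_cancel_left, hu]
    conv_lhs => rw [← Unitization.inl_fst_add_inr_snd_eq c]
    rw [mul_add, Unitization.inr_mul_inl, Unitization.inr_smul, sub_add_eq_sub_sub]
  rw [hsplit, Units.isUnit_units_mul, isUnit_one_sub_mul_comm, mul_assoc, ← hb,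
    ← Unitization.inr_mul]
  have hqb : IsQuasinilpotent ((q * b : A) : A₁) := isQuasinilpotent_inr_iff.mpr (hq b)
  simpa only [one_smul] using isQuasinilpotent_iff_forall_isUnit.mp hqb 1

theorem mem_jacobsonRadicalSet_unitization_iff {x : A₁} :
    x ∈ jacobsonRadicalSet A₁ ↔ x.fst = 0 ∧ x.snd ∈ jacobsonRadicalSet A := by
  constructor
  · intro hx
    have hfst : x.fst = 0 := by
      have hσ : x.fst ∈ spectrum ℂ x :=
        AlgHom.spectrum_apply_subset (Unitization.fstHom ℂ A) x (by simp [spectrum.mem_iff])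
      simpa using (isQuasinilpotent_iff_spectrum_subset.mp (by simpa using hx 1)) hσ
    lift x to A using hfst
    refine ⟨rfl, fun b ↦ ?_⟩
    simpa [← isQuasinilpotent_inr_iff] using hx b
  · rintro ⟨hfst, hsnd⟩
    lift x to A using hfst
    exact mem_jacobsonRadicalSet_iff_forall_isUnit.mpr
      (isUnit_one_sub_inr_mul (by simpa using hsnd))

end Unitization

theorem Unitization.continuous_lift {𝕜 A C : Type*} [NontriviallyNormedField 𝕜]
    [NonUnitalNormedRing A] [NormedSpace 𝕜 A] [IsScalarTower 𝕜 A A] [SMulCommClass 𝕜 A A]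
    [Ring C] [Algebra 𝕜 C] [TopologicalSpace C] [ContinuousAdd C] [ContinuousSMul 𝕜 C]
    {φ : A →ₙₐ[𝕜] C} (hφ : Continuous φ) : Continuous (Unitization.lift φ) :=
  ((continuous_algebraMap 𝕜 C).comp Unitization.continuous_fst).add
    (hφ.comp Unitization.continuous_snd)

namespace BanachRep

variable {A : Type u} [NonUnitalNormedRing A] [NormedSpace ℂ A] [IsScalarTower ℂ A A]
  [SMulCommClass ℂ A A] [RegularNormedAlgebra ℂ A]

noncomputable def unitization (ρ : BanachRep.{u} A) : BanachRep.{u} (Unitization ℂ A) where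
  X := ρ.X
  π := (Unitization.lift ρ.π).toNonUnitalAlgHom
  continuous := Unitization.continuous_lift ρ.continuous
  irreducible ξ hξ η :=
    let ⟨a, ha⟩ := ρ.irreducible ξ hξ η
    ⟨a, by simpa [AlgHom.toNonUnitalAlgHom] using ha⟩

theorem unitization_π_apply (ρ : BanachRep.{u} A) (x : Unitization ℂ A) :
    ρ.unitization.π x = algebraMap ℂ (ρ.X →L[ℂ] ρ.X) x.fst + ρ.π x.snd :=
  rfl

noncomputable def unitizationCharacter : BanachRep.{u} (Unitization ℂ A) where
  X := ULift.{u} ℂ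
  π := (Unitization.lift 0).toNonUnitalAlgHom
  continuous := Unitization.continuous_lift continuous_zero
  irreducible ξ hξ η := by
    have : ξ.down ≠ 0 := fun h ↦ hξ (ULift.ext _ _ h)
    refine ⟨Unitization.inl (η.down / ξ.down), ?_⟩
    ext
    simp [AlgHom.toNonUnitalAlgHom, Algebra.algebraMap_eq_smul_one, this]

theorem unitizationCharacter_π_eq_zero_iff {x : Unitization ℂ A} :
    (unitizationCharacter (A := A)).π x = 0 ↔ x.fst = 0 := by
  change algebraMap ℂ (ULift.{u} ℂ →L[ℂ] ULift.{u} ℂ) x.fst + 0 = 0 ↔ _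
  rw [add_zero, map_eq_zero_iff _ (algebraMap ℂ _).injective]

theorem rank_unitizationCharacter :
    Module.rank ℂ (unitizationCharacter (A := A)).X = 1 := by
  rw [unitizationCharacter, rank_ulift, Module.rank_self, Cardinal.lift_one]

theorem unitization_π_eq_zero_iff (ρ : BanachRep.{u} A) {x : Unitization ℂ A} (hx : x.fst = 0) :
    ρ.unitization.π x = 0 ↔ ρ.π x.snd = 0 := by
  rw [unitization_π_apply, hx, map_zero, zero_add]
  exact Iff.rfl

noncomputable def unitizationFamily {ι : Type u} (r : ι → BanachRep.{u} A) :
    Option ι → BanachRep.{u} (Unitization ℂ A) :=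
  fun o ↦ o.elim unitizationCharacter fun i ↦ (r i).unitization

theorem forall_unitizationFamily_π_eq_zero_iff {ι : Type u} (r : ι → BanachRep.{u} A)
    {x : Unitization ℂ A} :
    (∀ o, (unitizationFamily r o).π x = 0) ↔ x.fst = 0 ∧ ∀ i, (r i).π x.snd = 0 := by
  refine ⟨fun h ↦ ?_, fun ⟨hx, h⟩ ↦ ?_⟩
  · have hx : x.fst = 0 := unitizationCharacter_π_eq_zero_iff.mp (h none)
    exact ⟨hx, fun i ↦ ((r i).unitization_π_eq_zero_iff hx).mp (h (some i))⟩
  · rintro (_ | i)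
    · exact unitizationCharacter_π_eq_zero_iff.mpr hx
    · exact ((r i).unitization_π_eq_zero_iff hx).mpr (h i)

end BanachRep

theorem unitization_hasPropertyBeta_general
    {A : Type u} [NonUnitalNormedRing A] [NormedSpace ℂ A]
    [IsScalarTower ℂ A A] [SMulCommClass ℂ A A]
    [RegularNormedAlgebra ℂ A]
    (hβ : HasPropertyBeta.{u} A) :
    HasPropertyBeta.{u} (Unitization ℂ A) := by
  obtain ⟨ι, r, hker, hsq⟩ := hβ
  refine ⟨Option ι, BanachRep.unitizationFamily r, ?_, ?_⟩
  · ext x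
    rw [Set.mem_ofPred_eq, BanachRep.forall_unitizationFamily_π_eq_zero_iff,
      mem_jacobsonRadicalSet_unitization_iff, ← hker, Set.mem_ofPred_eq]
  · rintro (_ | i) hrank
    · have h1 : Module.rank ℂ (BanachRep.unitizationFamily r none).X = 1 :=
        BanachRep.rank_unitizationCharacter
      rw [h1] at hrank
      norm_num at hrank
    · obtain ⟨q, hq, hπq⟩ := hsq i hrank
      refine ⟨q, by rw [← Unitization.inr_mul, hq, Unitization.inr_zero], ?_⟩
      exact ((r i).unitization_π_eq_zero_iff (Unitization.fst_inr ℂ q)).not.mpr hπq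

/-- Let `A` be a non-unital complex Banach algebra with property `β` and
`A₁ = ℂ1 ⊕ A` its unitization.  Then `A₁` has property `β`. -/
theorem unitization_hasPropertyBeta
    {A : Type u} [NonUnitalNormedRing A] [NormedSpace ℂ A]
    [IsScalarTower ℂ A A] [SMulCommClass ℂ A A] [CompleteSpace A]
    [RegularNormedAlgebra ℂ A]
    (hA : ¬ ∃ e : A, ∀ a : A, e * a = a ∧ a * e = a)
    (hβ : HasPropertyBeta.{u} A) :
    HasPropertyBeta.{u} (Unitization ℂ A) :=
  unitization_hasPropertyBeta_general hβ
end

section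
/- Let π be a continuous irreducible representation of a complex Banach algebra A on a Banach space X with dim X ≥ 2, and suppose there exist a, b ∈ A with ab = 0, π(a) ≠ 0, π(b) ≠ 0. Then there exists q ∈ A with q² = 0 and π(q) ≠ 0. -/
theorem mul_mul_self_eq_zero_of_mul_eq_zero {A : Type*} [SemigroupWithZero A] {a b : A}
    (hab : a * b = 0) (c : A) : b * c * a * (b * c * a) = 0 := by
  calc b * c * a * (b * c * a) = b * c * (a * b) * (c * a) := by simp only [mul_assoc]
    _ = 0 := by rw [hab, mul_zero, zero_mul]

/-- The image of a transitive action is a prime algebra. -/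
theorem exists_mul_apply_mul_ne_zero_of_transitive {R A M F : Type*} [Semiring R]
    [AddCommMonoid M] [TopologicalSpace M] [Module R M] [FunLike F A (M →L[R] M)] (π : F)
    (hπ : ∀ ξ : M, ξ ≠ 0 → ∀ η : M, ∃ c : A, π c ξ = η) {f g : M →L[R] M}
    (hf : f ≠ 0) (hg : g ≠ 0) : ∃ c : A, g * π c * f ≠ 0 := by
  obtain ⟨ξ, hξ⟩ := DFunLike.ne_iff.mp hf
  obtain ⟨η, hη⟩ := DFunLike.ne_iff.mp hg
  obtain ⟨c, hc⟩ := hπ (f ξ) hξ η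
  exact ⟨c, DFunLike.ne_iff.mpr ⟨ξ, by simpa [hc] using hη⟩⟩

theorem square_zero_element_of_orthogonal_pair_general
    {A : Type*} [NonUnitalNormedRing A] [NormedSpace ℂ A]
    {X : Type*} [NormedAddCommGroup X] [NormedSpace ℂ X]
    (π : A →ₙₐ[ℂ] (X →L[ℂ] X))
    (hirr : ∀ ξ : X, ξ ≠ 0 → ∀ η : X, ∃ a : A, π a ξ = η)
    (a b : A) (hab : a * b = 0) (ha : π a ≠ 0) (hb : π b ≠ 0) :
    ∃ q : A, q * q = 0 ∧ π q ≠ 0 := by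
  obtain ⟨c, hc⟩ := exists_mul_apply_mul_ne_zero_of_transitive π hirr ha hb
  exact ⟨b * c * a, mul_mul_self_eq_zero_of_mul_eq_zero hab c, by simpa only [map_mul] using hc⟩

/-- Let `π` be a continuous irreducible representation of a complex Banach
algebra `A` on a Banach space `X` with `dim X ≥ 2`, and suppose there are `a, b ∈ A` with
`ab = 0`, `π(a) ≠ 0`, `π(b) ≠ 0`.  Then there is `q ∈ A` with `q² = 0` and `π(q) ≠ 0`. -/
theorem square_zero_element_of_orthogonal_pair
    {A : Type*} [NonUnitalNormedRing A] [NormedSpace ℂ A]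
    [IsScalarTower ℂ A A] [SMulCommClass ℂ A A] [CompleteSpace A]
    {X : Type*} [NormedAddCommGroup X] [NormedSpace ℂ X] [CompleteSpace X]
    (π : A →ₙₐ[ℂ] (X →L[ℂ] X)) (hπc : Continuous π)
    (hirr : ∀ ξ : X, ξ ≠ 0 → ∀ η : X, ∃ a : A, π a ξ = η)
    (hdim : 2 ≤ Module.rank ℂ X)
    (a b : A) (hab : a * b = 0) (ha : π a ≠ 0) (hb : π b ≠ 0) :
    ∃ q : A, q * q = 0 ∧ π q ≠ 0 :=
  square_zero_element_of_orthogonal_pair_general π hirr a b hab ha hb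
end

section
/- Let A be a unital complex Banach algebra, π a continuous irreducible representation of A on a (necessarily) Banach space X. If ξ₁, …, ξ_n ∈ X are linearly independent and η₁, …, η_n ∈ X are linearly independent, then there exists an invertible a ∈ A with π(a)ξ_i = η_i for i = 1, …, n (Sinclair's density theorem with invertible element). -/
/-!
By Schur's lemma and Gelfand–Mazur, every bounded operator commuting with `π` is a scalar. If every
`b` killing `ξ₁, …, ξₙ` also kills `z`, the open mapping theorem turns `(π a ξᵢ)ᵢ ↦ π a z` into such
a bounded intertwiner `Xⁿ → X`, which forces `z ∈ span ξ`; by induction this gives Jacobson density.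

For invertibility, `exp b` is a unit and `π (exp b) = exp (π b)` acts as `z ↦ z + π b z` when
`π b (π b z) = 0`, and as `z ↦ e^c z` when `π b z = c z`. Density provides `b` making these shears
and dilations fix `ξ₁, …, ξₙ` and send `z` to any `w` with `ξ₁, …, ξₙ, w` independent, which moves
`ξ` to `η` one vector at a time.
-/

open Function Set Submodule NormedSpace
open scoped Nat

namespace ContinuousLinearMap

variable {𝕜 E F G : Type*} [NontriviallyNormedField 𝕜]
  [NormedAddCommGroup E] [NormedSpace 𝕜 E] [CompleteSpace E]
  [NormedAddCommGroup F] [NormedSpace 𝕜 F] [CompleteSpace F]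
  [AddCommGroup G] [Module 𝕜 G] [TopologicalSpace G]

theorem exists_comp_eq_of_surjective_of_ker_le (Ψ : E →L[𝕜] F) (hΨ : Surjective Ψ)
    (f : E →L[𝕜] G) (h : Ψ.ker ≤ f.ker) :
    ∃ g : F →L[𝕜] G, g.comp Ψ = f := by
  let g : F →ₗ[𝕜] G :=
    Ψ.ker.liftQ (f : E →ₗ[𝕜] G) h ∘ₗ
      ((LinearMap.quotKerEquivOfSurjective (Ψ : E →ₗ[𝕜] F) hΨ).symm : F →ₗ[𝕜] E ⧸ Ψ.ker)
  have hg : ∀ x, g (Ψ x) = f x := fun x =>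
    congrArg (Ψ.ker.liftQ (f : E →ₗ[𝕜] G) h)
      (LinearMap.quotKerEquivOfSurjective_symm_apply (Ψ : E →ₗ[𝕜] F) hΨ x)
  have hgc : Continuous g := by
    rw [(Ψ.isQuotientMap hΨ).continuous_iff]
    simpa [Function.comp_def, hg] using f.continuous
  exact ⟨⟨g, hgc⟩, ext hg⟩

end ContinuousLinearMap

section Exp

variable {X : Type*} [NormedAddCommGroup X] [NormedSpace ℂ X] [CompleteSpace X]

theorem hasSum_exp_apply (T : X →L[ℂ] X) (x : X) :
    HasSum (fun k : ℕ => (k !⁻¹ : ℂ) • (T ^ k) x) (exp T x) := by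
  simpa using (exp_series_hasSum_exp' (𝕂 := ℂ) T).mapL (ContinuousLinearMap.apply ℂ X x)

theorem exp_apply_of_apply_apply_eq_zero {T : X →L[ℂ] X} {x : X} (h : T (T x) = 0) :
    exp T x = x + T x := by
  have hsum : HasSum (fun k : ℕ => (k !⁻¹ : ℂ) • (T ^ k) x)
      (∑ k ∈ Finset.range 2, (k !⁻¹ : ℂ) • (T ^ k) x) := by
    refine hasSum_sum_of_ne_finset_zero fun k hk => ?_
    obtain ⟨m, rfl⟩ : ∃ m, k = m + 2 := ⟨k - 2, by simp at hk; omega⟩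
    simp [pow_add, sq, h]
  simpa [Finset.sum_range_succ] using (hasSum_exp_apply T x).unique hsum

theorem exp_apply_of_apply_eq_smul {T : X →L[ℂ] X} {x : X} {c : ℂ} (h : T x = c • x) :
    exp T x = Complex.exp c • x := by
  have hpow : ∀ k : ℕ, (T ^ k) x = c ^ k • x := by
    intro k
    induction k with
    | zero => simp
    | succ k ih => simp [pow_succ', ih, h, smul_smul, mul_comm]
  refine (hasSum_exp_apply T x).unique ?_
  rw [Complex.exp_eq_exp_ℂ]
  simpa only [hpow, smul_smul, smul_eq_mul] using (exp_series_hasSum_exp' (𝕂 := ℂ) c).smul_const x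

end Exp

section Schur

variable {A X : Type*} [Ring A] [Algebra ℂ A] [NormedAddCommGroup X] [NormedSpace ℂ X]
  (π : A →ₐ[ℂ] (X →L[ℂ] X))

theorem isUnit_of_commute_of_ne_zero [CompleteSpace X]
    (hirr : ∀ ξ : X, ξ ≠ 0 → ∀ η : X, ∃ a : A, π a ξ = η)
    {S : X →L[ℂ] X} (hS : ∀ a, Commute S (π a)) (hS₀ : S ≠ 0) : IsUnit S := by
  have hSπ : ∀ a x, S (π a x) = π a (S x) := fun a x => congr($(hS a) x)
  rw [ContinuousLinearMap.isUnit_iff_bijective]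
  refine ⟨(injective_iff_map_eq_zero S).mpr fun x hx => ?_, fun y => ?_⟩
  · by_contra hx₀
    refine hS₀ (ContinuousLinearMap.ext fun w => ?_)
    obtain ⟨a, rfl⟩ := hirr x hx₀ w
    simp [hSπ, hx]
  · obtain ⟨x, hx⟩ : ∃ x, S x ≠ 0 := by
      by_contra! h
      exact hS₀ (ContinuousLinearMap.ext h)
    obtain ⟨a, rfl⟩ := hirr (S x) hx y
    exact ⟨π a x, hSπ a x⟩

theorem exists_eq_algebraMap_of_commute [CompleteSpace X]
    (hirr : ∀ ξ : X, ξ ≠ 0 → ∀ η : X, ∃ a : A, π a ξ = η)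
    {T : X →L[ℂ] X} (hT : ∀ a, Commute T (π a)) : ∃ c : ℂ, T = algebraMap ℂ _ c := by
  rcases subsingleton_or_nontrivial X with _ | _
  · exact ⟨0, Subsingleton.elim _ _⟩
  obtain ⟨c, hc⟩ := spectrum.nonempty T
  refine ⟨c, by_contra fun hne => hc (isUnit_of_commute_of_ne_zero π hirr (fun a => ?_) ?_)⟩
  · exact (Algebra.commute_algebraMap_left c (π a)).sub_left (hT a)
  · exact sub_ne_zero.mpr (Ne.symm hne)

theorem linearIndependent_map_unit (u : Aˣ) {ι : Type*} {ξ : ι → X}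
    (hξ : LinearIndependent ℂ ξ) : LinearIndependent ℂ (π u ∘ ξ) := by
  refine hξ.map' (π u : X →ₗ[ℂ] X) (LinearMap.ker_eq_bot.mpr ?_)
  refine LeftInverse.injective (g := π ↑u⁻¹) fun x => ?_
  simp [← mul_apply_eq_comp, ← map_mul]

end Schur

section Banach

variable {A X : Type*} [NormedRing A] [NormedAlgebra ℂ A] [CompleteSpace A]
  [NormedAddCommGroup X] [NormedSpace ℂ X] (π : A →ₐ[ℂ] (X →L[ℂ] X))

theorem exists_unit_map_eq_exp (hπc : Continuous π) (b : A) : ∃ u : Aˣ, π u = exp (π b) := by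
  let : NormedAlgebra ℚ A := .restrictScalars ℚ ℂ A
  let : NormedAlgebra ℚ (X →L[ℂ] X) := .restrictScalars ℚ ℂ (X →L[ℂ] X)
  exact ⟨(isUnit_exp b).unit, map_exp π hπc b⟩

variable [CompleteSpace X]

theorem mem_span_range_of_forall_apply_eq_zero (hπc : Continuous π)
    (hirr : ∀ ξ : X, ξ ≠ 0 → ∀ η : X, ∃ a : A, π a ξ = η)
    {ι : Type*} [Fintype ι] [DecidableEq ι] {ξ : ι → X}
    (htrans : ∀ η : ι → X, ∃ a : A, ∀ i, π a (ξ i) = η i) {z : X}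
    (hz : ∀ b : A, (∀ i, π b (ξ i) = 0) → π b z = 0) : z ∈ span ℂ (range ξ) := by
  let P : A →L[ℂ] (X →L[ℂ] X) := ⟨π.toLinearMap, hπc⟩
  let Ψ : A →L[ℂ] (ι → X) :=
    ContinuousLinearMap.pi fun i => (ContinuousLinearMap.apply ℂ X (ξ i)).comp P
  have hΨ : Surjective Ψ := fun η => (htrans η).imp fun a ha => funext ha
  obtain ⟨F, hF⟩ := Ψ.exists_comp_eq_of_surjective_of_ker_le hΨ
    ((ContinuousLinearMap.apply ℂ X z).comp P) fun b hb => hz b (congrFun hb)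
  have hΨapp : ∀ a i, Ψ a i = π a (ξ i) := fun _ _ => rfl
  have hFΨ : ∀ a, F (fun i => π a (ξ i)) = π a z := fun a => congr($hF a)
  have hFπ : ∀ (a : A) (y : ι → X), F (fun i => π a (y i)) = π a (F y) := by
    intro a y
    obtain ⟨b, rfl⟩ := hΨ y
    calc F (fun i => π a (Ψ b i)) = π (a * b) z := by simpa [hΨapp] using hFΨ (a * b)
      _ = π a (F (fun i => π b (ξ i))) := by rw [hFΨ, map_mul, mul_apply_eq_comp]
  have hscalar : ∀ i, ∃ c : ℂ, F.comp (ContinuousLinearMap.single ℂ (fun _ => X) i) =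
      algebraMap ℂ _ c := fun i =>
    exists_eq_algebraMap_of_commute π hirr fun a => ContinuousLinearMap.ext fun x => by
      have hsingle : (fun j => π a ((Pi.single i x : ι → X) j)) = Pi.single i (π a x) := by
        ext j
        rcases eq_or_ne j i with rfl | hji <;> simp [*]
      simpa [hsingle] using hFπ a (Pi.single i x)
  choose c hc using hscalar
  have hFsingle : ∀ i x, F (Pi.single i x) = c i • x := fun i x => by
    simpa using congr($(hc i) x)
  refine (mem_span_range_iff_exists_fun ℂ).mpr ⟨c, ?_⟩
  calc ∑ i, c i • ξ i = ∑ i, F (Pi.single i (ξ i)) := by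
        simp [hFsingle]
    _ = F ξ := by rw [← map_sum, Finset.univ_sum_single]
    _ = z := by simpa using hFΨ 1

theorem exists_annihilator_apply_eq (hπc : Continuous π)
    (hirr : ∀ ξ : X, ξ ≠ 0 → ∀ η : X, ∃ a : A, π a ξ = η)
    {ι : Type*} [Fintype ι] [DecidableEq ι] {ξ : ι → X}
    (htrans : ∀ η : ι → X, ∃ a : A, ∀ i, π a (ξ i) = η i) {z : X}
    (hz : z ∉ span ℂ (range ξ)) (y : X) : ∃ b : A, (∀ i, π b (ξ i) = 0) ∧ π b z = y := by
  obtain ⟨b, hbξ, hbz⟩ : ∃ b : A, (∀ i, π b (ξ i) = 0) ∧ π b z ≠ 0 := by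
    by_contra! h
    exact hz (mem_span_range_of_forall_apply_eq_zero π hπc hirr htrans h)
  obtain ⟨c, hc⟩ := hirr _ hbz y
  exact ⟨c * b, fun i => by simp [hbξ], by simpa using hc⟩

theorem exists_apply_eq_of_linearIndependent (hπc : Continuous π)
    (hirr : ∀ ξ : X, ξ ≠ 0 → ∀ η : X, ∃ a : A, π a ξ = η)
    {n : ℕ} {ξ : Fin n → X} (hξ : LinearIndependent ℂ ξ) (η : Fin n → X) :
    ∃ a : A, ∀ i, π a (ξ i) = η i := by
  induction n with
  | zero => exact ⟨0, finZeroElim⟩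
  | succ n ih =>
    obtain ⟨ξ, z, rfl⟩ : ∃ ξ' z, Fin.snoc ξ' z = ξ := ⟨_, _, Fin.snoc_init_self ξ⟩
    obtain ⟨hξ, hz⟩ := linearIndependent_finSnoc.mp hξ
    obtain ⟨a, ha⟩ := ih hξ (Fin.init η)
    obtain ⟨b, hbξ, hbz⟩ := exists_annihilator_apply_eq π hπc hirr (ih hξ) hz
      (η (Fin.last n) - π a z)
    refine ⟨a + b, Fin.lastCases ?_ fun i => ?_⟩
    · simp [hbz]
    · simpa [hbξ, Fin.init] using ha i

theorem exists_unit_fixing_apply_eq_add (hπc : Continuous π) {ι : Type*} {ξ : ι → X} {b : A}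
    (hbξ : ∀ i, π b (ξ i) = 0) {z : X} (hz : π b (π b z) = 0) :
    ∃ u : Aˣ, (∀ i, π u (ξ i) = ξ i) ∧ π u z = z + π b z := by
  obtain ⟨u, hu⟩ := exists_unit_map_eq_exp π hπc b
  refine ⟨u, fun i => ?_, by rw [hu, exp_apply_of_apply_apply_eq_zero hz]⟩
  rw [hu, exp_apply_of_apply_apply_eq_zero (by rw [hbξ, map_zero]), hbξ, add_zero]

theorem exists_unit_fixing_apply_eq_smul (hπc : Continuous π) {ι : Type*} {ξ : ι → X} {b : A}
    (hbξ : ∀ i, π b (ξ i) = 0) {z : X} {c : ℂ} (hz : π b z = c • z) :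
    ∃ u : Aˣ, (∀ i, π u (ξ i) = ξ i) ∧ π u z = Complex.exp c • z := by
  obtain ⟨u, hu⟩ := exists_unit_map_eq_exp π hπc b
  refine ⟨u, fun i => ?_, by rw [hu, exp_apply_of_apply_eq_smul hz]⟩
  rw [hu, exp_apply_of_apply_apply_eq_zero (by rw [hbξ, map_zero]), hbξ, add_zero]

theorem exists_unit_fixing_apply_eq (hπc : Continuous π)
    (hirr : ∀ ξ : X, ξ ≠ 0 → ∀ η : X, ∃ a : A, π a ξ = η)
    {n : ℕ} {ξ : Fin n → X} {z w : X} (hz : LinearIndependent ℂ (Fin.snoc ξ z))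
    (hw : LinearIndependent ℂ (Fin.snoc ξ w)) :
    ∃ u : Aˣ, (∀ i, π u (ξ i) = ξ i) ∧ π u z = w := by
  obtain ⟨hξ, hzξ⟩ := linearIndependent_finSnoc.mp hz
  have htrans := exists_apply_eq_of_linearIndependent π hπc hirr hξ
  by_cases hwz : w ∈ span ℂ (insert z (range ξ))
  -- `w = μ z + s` with `μ ≠ 0` and `s ∈ span ξ`: dilate `z` to `μ z`, then shear by `s`
  · obtain ⟨μ, s, hs, rfl⟩ := mem_span_insert.mp hwz
    have hμ : μ ≠ 0 := by
      rintro rfl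
      exact (linearIndependent_finSnoc.mp hw).2 (by simpa using hs)
    have hμz : μ • z ∉ span ℂ (range ξ) := by rwa [smul_mem_iff _ hμ]
    obtain ⟨b₁, hb₁ξ, hb₁z⟩ :=
      exists_annihilator_apply_eq π hπc hirr htrans hzξ (Complex.log μ • z)
    obtain ⟨u₁, hu₁ξ, hu₁z⟩ := exists_unit_fixing_apply_eq_smul π hπc hb₁ξ hb₁z
    rw [Complex.exp_log hμ] at hu₁z
    obtain ⟨b₂, hb₂ξ, hb₂z⟩ := exists_annihilator_apply_eq π hπc hirr htrans hμz s
    have hb₂s : π b₂ s = 0 :=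
      (span_le (p := (π b₂ : X →ₗ[ℂ] X).ker)).mpr (range_subset_iff.mpr hb₂ξ) hs
    obtain ⟨u₂, hu₂ξ, hu₂z⟩ := exists_unit_fixing_apply_eq_add π hπc hb₂ξ
      (by rw [hb₂z, hb₂s] : π b₂ (π b₂ (μ • z)) = 0)
    refine ⟨u₂ * u₁, fun i => ?_, ?_⟩
    · simp [hu₁ξ, hu₂ξ]
    · simp [hu₁z, hu₂z, hb₂z]
  · have hξzw : LinearIndependent ℂ (Fin.snoc (Fin.snoc ξ z) w) :=
      linearIndependent_finSnoc.mpr ⟨hz, by simpa [Fin.range_snoc] using hwz⟩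
    obtain ⟨b, hb⟩ := exists_apply_eq_of_linearIndependent π hπc hirr hξzw
      (Fin.snoc (Fin.snoc 0 (w - z)) (w - z))
    have hbξ : ∀ i, π b (ξ i) = 0 := fun i => by
      simpa using hb (Fin.castSucc (Fin.castSucc i))
    have hbz : π b z = w - z := by simpa using hb (Fin.castSucc (Fin.last n))
    have hbw : π b w = w - z := by simpa using hb (Fin.last (n + 1))
    obtain ⟨u, hu⟩ := exists_unit_fixing_apply_eq_add π hπc hbξ
      (by rw [hbz, map_sub, hbw, hbz, sub_self] : π b (π b z) = 0)
    exact ⟨u, hu.1, by rw [hu.2, hbz, add_sub_cancel]⟩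

end Banach

/-- **Sinclair's density theorem.** Let `π` be a continuous irreducible
representation of a unital complex Banach algebra `A` on a Banach space `X`.  If
`ξ₁, …, ξₙ ∈ X` are linearly independent and `η₁, …, ηₙ ∈ X` are linearly independent,
then there exists an invertible `a ∈ A` with `π(a)ξᵢ = ηᵢ` for all `i`. -/
theorem sinclair_density
    {A : Type*} [NormedRing A] [NormedAlgebra ℂ A] [CompleteSpace A]
    {X : Type*} [NormedAddCommGroup X] [NormedSpace ℂ X] [CompleteSpace X]
    (π : A →ₐ[ℂ] (X →L[ℂ] X)) (hπc : Continuous π)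
    (hirr : ∀ ξ : X, ξ ≠ 0 → ∀ η : X, ∃ a : A, π a ξ = η)
    {n : ℕ} (ξ η : Fin n → X)
    (hξ : LinearIndependent ℂ ξ) (hη : LinearIndependent ℂ η) :
    ∃ a : Aˣ, ∀ i, π (↑a) (ξ i) = η i := by
  induction n with
  | zero => exact ⟨1, finZeroElim⟩
  | succ n ih =>
    obtain ⟨ξ, z, rfl⟩ : ∃ ξ' z, Fin.snoc ξ' z = ξ := ⟨_, _, Fin.snoc_init_self ξ⟩
    obtain ⟨η, w, rfl⟩ : ∃ η' w, Fin.snoc η' w = η := ⟨_, _, Fin.snoc_init_self η⟩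
    obtain ⟨u₀, hu₀⟩ := ih ξ η (linearIndependent_finSnoc.mp hξ).1
      (linearIndependent_finSnoc.mp hη).1
    have hηz : LinearIndependent ℂ (Fin.snoc η (π u₀ z)) := by
      have hcomp : π u₀ ∘ Fin.snoc ξ z = Fin.snoc η (π u₀ z) := by
        rw [Fin.comp_snoc, comp_def, funext hu₀]
      exact hcomp ▸ linearIndependent_map_unit π u₀ hξ
    obtain ⟨u₁, hu₁η, hu₁z⟩ := exists_unit_fixing_apply_eq π hπc hirr hηz hη
    refine ⟨u₁ * u₀, Fin.lastCases ?_ fun i => ?_⟩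
    · simp [hu₁z]
    · simp [hu₀, hu₁η]
end
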